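/- In any Staircase or Double-Staircase rectangle-contact layout of a maximal outerplanar graph, for every inner triangular face {p,q,r} the pairwise shared boundary segments of the three rectangles form a T-shape: exactly one of the three vertices (the pole) has its two shared boundary segments collinear. -/
import Mathlib


/-- Maximal outerplanar graph on `Fin n` with outer (Hamiltonian) cycle `0,1,...,n-1`:
it contains all cycle edges, its chords are pairwise non-crossing, and it has the
maximal number `2n-3` of edges. -/
def MaxOuterplanar (n : ℕ) (G : SimpleGraph (Fin n)) : Prop :=
  (∀ i : Fin n, ∀ _ : 1 < n, G.Adj i ⟨((i : ℕ) + 1) % n, Nat.mod_lt _ (by omega)⟩) ∧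
  (∀ a b c d : Fin n, G.Adj a b → G.Adj c d → ¬(a < c ∧ c < b ∧ b < d)) ∧
  G.edgeSet.ncard = 2 * n - 3


/-- An axis-aligned rectangle in the plane. -/
structure Rect where
  xlo : ℝ
  xhi : ℝ
  ylo : ℝ
  yhi : ℝ
  hx : xlo < xhi
  hy : ylo < yhi

def Rect.toSet (R : Rect) : Set (ℝ × ℝ) :=
  {p | R.xlo ≤ p.1 ∧ p.1 ≤ R.xhi ∧ R.ylo ≤ p.2 ∧ p.2 ≤ R.yhi}

def Rect.interior (R : Rect) : Set (ℝ × ℝ) :=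
  {p | R.xlo < p.1 ∧ p.1 < R.xhi ∧ R.ylo < p.2 ∧ p.2 < R.yhi}

def Rect.area (R : Rect) : ℝ := (R.xhi - R.xlo) * (R.yhi - R.ylo)

def Rect.IsSquare (R : Rect) : Prop := R.xhi - R.xlo = R.yhi - R.ylo

/-- Two rectangles share a boundary segment of positive length. -/
def Rect.Contact (R S : Rect) : Prop :=
  ((R.xhi = S.xlo ∨ S.xhi = R.xlo) ∧ max R.ylo S.ylo < min R.yhi S.yhi) ∨
  ((R.yhi = S.ylo ∨ S.yhi = R.ylo) ∧ max R.xlo S.xlo < min R.xhi S.xhi)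

/-- A Staircase layout of a graph on `Fin n`: a rectangle-contact representation in
which the rectangle of vertex `0` is leftmost, the rectangle of vertex `n-1` is
bottommost among the remaining ones, and the top-right corner of every rectangle
is exposed. -/
def StaircaseLayout {n : ℕ} (hn : 3 ≤ n) (G : SimpleGraph (Fin n))
    (ρ : Fin n → Rect) : Prop :=
  (∀ u v, u ≠ v → Disjoint (ρ u).interior (ρ v).interior) ∧
  (∀ u v, u ≠ v → (G.Adj u v ↔ Rect.Contact (ρ u) (ρ v))) ∧
  (∀ v, (ρ ⟨0, by omega⟩).xlo ≤ (ρ v).xlo) ∧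
  (∀ v, v ≠ ⟨0, by omega⟩ → (ρ ⟨n - 1, by omega⟩).ylo ≤ (ρ v).ylo) ∧
  (∀ v u, u ≠ v → ((ρ v).xhi, (ρ v).yhi) ∉ (ρ u).toSet)

/-- A Double-Staircase layout with pivot `i`. -/
def DoubleStaircaseLayout {n : ℕ} (hn : 3 ≤ n) (G : SimpleGraph (Fin n))
    (ρ : Fin n → Rect) (i : Fin n) : Prop :=
  (∀ u v, u ≠ v → Disjoint (ρ u).interior (ρ v).interior) ∧
  (∀ u v, u ≠ v → (G.Adj u v ↔ Rect.Contact (ρ u) (ρ v))) ∧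
  (∀ v, (ρ ⟨0, by omega⟩).xlo ≤ (ρ v).xlo) ∧
  (∀ v, v ≠ ⟨0, by omega⟩ → (ρ ⟨n - 1, by omega⟩).ylo ≤ (ρ v).ylo) ∧
  (∀ v, v ≤ i → ∀ u, u ≠ v → ((ρ v).xhi, (ρ v).yhi) ∉ (ρ u).toSet) ∧
  (∀ v, i ≤ v → ∀ u, u ≠ v → ((ρ v).xhi, (ρ v).ylo) ∉ (ρ u).toSet)

/-- `R` and `S` share a vertical boundary segment (of positive length) on the line
`x = c`. -/
def VContactAt (R S : Rect) (c : ℝ) : Prop :=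
  ((R.xhi = c ∧ S.xlo = c) ∨ (S.xhi = c ∧ R.xlo = c)) ∧
    max R.ylo S.ylo < min R.yhi S.yhi

/-- `R` and `S` share a horizontal boundary segment (of positive length) on the
line `y = c`. -/
def HContactAt (R S : Rect) (c : ℝ) : Prop :=
  ((R.yhi = c ∧ S.ylo = c) ∨ (S.yhi = c ∧ R.ylo = c)) ∧
    max R.xlo S.xlo < min R.xhi S.xhi

/-- Vertex `v` is the pole of the triangle `{v, q, r}`: its two shared boundary
segments (with the rectangles of `q` and `r`) are collinear. -/
def IsPole {n : ℕ} (ρ : Fin n → Rect) (v q r : Fin n) : Prop :=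
  (∃ c, VContactAt (ρ v) (ρ q) c ∧ VContactAt (ρ v) (ρ r) c) ∨
  (∃ c, HContactAt (ρ v) (ρ q) c ∧ HContactAt (ρ v) (ρ r) c)

namespace TriPoleAux

/-- The pole predicate on raw rectangles. -/
def PoleR (A B C : Rect) : Prop :=
  (∃ c, VContactAt A B c ∧ VContactAt A C c) ∨
  (∃ c, HContactAt A B c ∧ HContactAt A C c)

lemma vsymm {R S : Rect} {c : ℝ} (h : VContactAt R S c) : VContactAt S R c :=
  ⟨h.1.symm, by have h2 := h.2; rw [max_comm, min_comm] at h2; exact h2⟩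

lemma hsymm {R S : Rect} {c : ℝ} (h : HContactAt R S c) : HContactAt S R c :=
  ⟨h.1.symm, by have h2 := h.2; rw [max_comm, min_comm] at h2; exact h2⟩

lemma vx {R S : Rect} {c : ℝ} (h : VContactAt R S c) :
    R.xhi = S.xlo ∨ S.xhi = R.xlo := by
  rcases h.1 with ⟨e1, e2⟩ | ⟨e1, e2⟩
  · exact Or.inl (e1.trans e2.symm)
  · exact Or.inr (e1.trans e2.symm)

lemma hy {R S : Rect} {c : ℝ} (h : HContactAt R S c) :
    R.yhi = S.ylo ∨ S.yhi = R.ylo := by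
  rcases h.1 with ⟨e1, e2⟩ | ⟨e1, e2⟩
  · exact Or.inl (e1.trans e2.symm)
  · exact Or.inr (e1.trans e2.symm)

lemma hxover {R S : Rect} {c : ℝ} (h : HContactAt R S c) :
    R.xlo < S.xhi ∧ S.xlo < R.xhi :=
  ⟨lt_of_le_of_lt (le_max_left _ _) (lt_of_lt_of_le h.2 (min_le_right _ _)),
   lt_of_le_of_lt (le_max_right _ _) (lt_of_lt_of_le h.2 (min_le_left _ _))⟩

lemma vyover {R S : Rect} {c : ℝ} (h : VContactAt R S c) :
    R.ylo < S.yhi ∧ S.ylo < R.yhi :=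
  ⟨lt_of_le_of_lt (le_max_left _ _) (lt_of_lt_of_le h.2 (min_le_right _ _)),
   lt_of_le_of_lt (le_max_right _ _) (lt_of_lt_of_le h.2 (min_le_left _ _))⟩

/-- A pair of rectangles cannot have both a vertical and a horizontal contact. -/
lemma notVH {R S : Rect} {c d : ℝ} (hv : VContactAt R S c) (hh : HContactAt R S d) :
    False := by
  obtain ⟨h1, h2⟩ := hxover hh
  rcases vx hv with e | e <;> linarith

lemma vvv_false {A B C : Rect} {c1 c2 c3 : ℝ} (h1 : VContactAt A B c1)
    (h2 : VContactAt B C c2) (h3 : VContactAt A C c3) : False := by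
  have e1 := vx h1; have e2 := vx h2; have e3 := vx h3
  have ha := A.hx; have hb := B.hx; have hc := C.hx
  rcases e1 with e1 | e1 <;> rcases e2 with e2 | e2 <;> rcases e3 with e3 | e3 <;> linarith

lemma hhh_false {A B C : Rect} {c1 c2 c3 : ℝ} (h1 : HContactAt A B c1)
    (h2 : HContactAt B C c2) (h3 : HContactAt A C c3) : False := by
  have e1 := hy h1; have e2 := hy h2; have e3 := hy h3
  have ha := A.hy; have hb := B.hy; have hc := C.hy
  rcases e1 with e1 | e1 <;> rcases e2 with e2 | e2 <;> rcases e3 with e3 | e3 <;> linarith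

lemma pole_comm {A B C : Rect} (h : PoleR A B C) : PoleR A C B := by
  rcases h with ⟨c, h1, h2⟩ | ⟨c, h1, h2⟩
  · exact Or.inl ⟨c, h2, h1⟩
  · exact Or.inr ⟨c, h2, h1⟩

/-- Core case: the two vertical contacts share vertex `A`; then `A` is the unique pole. -/
lemma coreV {A B C : Rect} {cb cc d : ℝ} (hab : VContactAt A B cb)
    (hac : VContactAt A C cc) (hbc : HContactAt B C d) :
    PoleR A B C ∧ ¬ PoleR B A C ∧ ¬ PoleR C A B := by
  obtain ⟨hbc1, hbc2⟩ := hxover hbc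
  refine ⟨?_, ?_, ?_⟩
  · left
    have ha := A.hx
    have hcc : cb = cc := by
      rcases hab.1 with ⟨e1, e2⟩ | ⟨e1, e2⟩ <;> rcases hac.1 with ⟨f1, f2⟩ | ⟨f1, f2⟩ <;>
        linarith
    exact ⟨cb, hab, by rw [hcc]; exact hac⟩
  · rintro (⟨c, h1, h2⟩ | ⟨c, h1, h2⟩)
    · exact notVH h2 hbc
    · exact notVH hab (hsymm h1)
  · rintro (⟨c, h1, h2⟩ | ⟨c, h1, h2⟩)
    · exact notVH (vsymm h2) hbc
    · exact notVH hac (hsymm h1)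

/-- Core case: the two horizontal contacts share vertex `A`. -/
lemma coreH {A B C : Rect} {cb cc d : ℝ} (hab : HContactAt A B cb)
    (hac : HContactAt A C cc) (hbc : VContactAt B C d) :
    PoleR A B C ∧ ¬ PoleR B A C ∧ ¬ PoleR C A B := by
  obtain ⟨hbc1, hbc2⟩ := vyover hbc
  refine ⟨?_, ?_, ?_⟩
  · right
    have ha := A.hy
    have hcc : cb = cc := by
      rcases hab.1 with ⟨e1, e2⟩ | ⟨e1, e2⟩ <;> rcases hac.1 with ⟨f1, f2⟩ | ⟨f1, f2⟩ <;>
        linarith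
    exact ⟨cb, hab, by rw [hcc]; exact hac⟩
  · rintro (⟨c, h1, h2⟩ | ⟨c, h1, h2⟩)
    · exact notVH (vsymm h1) hab
    · exact notVH hbc h2
  · rintro (⟨c, h1, h2⟩ | ⟨c, h1, h2⟩)
    · exact notVH (vsymm h1) hac
    · exact notVH hbc (hsymm h2)

lemma contact_vh {R S : Rect} (h : R.Contact S) :
    (∃ c, VContactAt R S c) ∨ ∃ c, HContactAt R S c := by
  rcases h with ⟨h1, h2⟩ | ⟨h1, h2⟩
  · rcases h1 with e | e
    · exact Or.inl ⟨S.xlo, Or.inl ⟨e, rfl⟩, h2⟩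
    · exact Or.inl ⟨R.xlo, Or.inr ⟨e, rfl⟩, h2⟩
  · rcases h1 with e | e
    · exact Or.inr ⟨S.ylo, Or.inl ⟨e, rfl⟩, h2⟩
    · exact Or.inr ⟨R.ylo, Or.inr ⟨e, rfl⟩, h2⟩

/-- Purely local T-shape lemma for three pairwise contacting rectangles. -/
lemma tri (A B C : Rect) (hAB : A.Contact B) (hBC : B.Contact C) (hAC : A.Contact C) :
    (PoleR A B C ∧ ¬ PoleR B A C ∧ ¬ PoleR C A B) ∨
    (¬ PoleR A B C ∧ PoleR B A C ∧ ¬ PoleR C A B) ∨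
    (¬ PoleR A B C ∧ ¬ PoleR B A C ∧ PoleR C A B) := by
  rcases contact_vh hAB with ⟨a, ha⟩ | ⟨a, ha⟩ <;>
    rcases contact_vh hBC with ⟨b, hb⟩ | ⟨b, hb⟩ <;>
      rcases contact_vh hAC with ⟨c, hc⟩ | ⟨c, hc⟩
  · exact (vvv_false ha hb hc).elim
  · -- V V H : pole is B
    obtain ⟨P, nA, nC⟩ := coreV (vsymm ha) hb hc
    exact Or.inr (Or.inl ⟨nA, P, fun hp => nC (pole_comm hp)⟩)
  · -- V H V : pole is A
    obtain ⟨P, nB, nC⟩ := coreV ha hc hb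
    exact Or.inl ⟨P, nB, nC⟩
  · -- V H H : pole is C
    obtain ⟨P, nB, nA⟩ := coreH (hsymm hb) (hsymm hc) (vsymm ha)
    exact Or.inr (Or.inr ⟨fun hp => nA (pole_comm hp), fun hp => nB (pole_comm hp),
      pole_comm P⟩)
  · -- H V V : pole is C
    obtain ⟨P, nB, nA⟩ := coreV (vsymm hb) (vsymm hc) (hsymm ha)
    exact Or.inr (Or.inr ⟨fun hp => nA (pole_comm hp), fun hp => nB (pole_comm hp),
      pole_comm P⟩)
  · -- H V H : pole is A
    obtain ⟨P, nB, nC⟩ := coreH ha hc hb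
    exact Or.inl ⟨P, nB, nC⟩
  · -- H H V : pole is B
    obtain ⟨P, nA, nC⟩ := coreH (hsymm ha) hb hc
    exact Or.inr (Or.inl ⟨nA, P, fun hp => nC (pole_comm hp)⟩)
  · exact (hhh_false ha hb hc).elim

end TriPoleAux

/-- In any Staircase or Double-Staircase layout of a maximal
outerplanar graph, for every (inner triangular face) triangle `{p,q,r}` the shared
boundaries of the three rectangles form a T-shape: exactly one of the three
vertices is a pole. -/
theorem triangle_has_unique_pole
    {n : ℕ} (hn : 3 ≤ n) (G : SimpleGraph (Fin n)) (hG : MaxOuterplanar n G)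
    (ρ : Fin n → Rect)
    (h : StaircaseLayout hn G ρ ∨ ∃ i : Fin n, DoubleStaircaseLayout hn G ρ i)
    (p q r : Fin n) (hpq : G.Adj p q) (hqr : G.Adj q r) (hpr : G.Adj p r) :
    (IsPole ρ p q r ∧ ¬ IsPole ρ q p r ∧ ¬ IsPole ρ r p q) ∨
    (¬ IsPole ρ p q r ∧ IsPole ρ q p r ∧ ¬ IsPole ρ r p q) ∨
    (¬ IsPole ρ p q r ∧ ¬ IsPole ρ q p r ∧ IsPole ρ r p q) := by
  have hadj : ∀ u v, u ≠ v → (G.Adj u v ↔ Rect.Contact (ρ u) (ρ v)) := by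
    rcases h with hs | ⟨i, hd⟩
    · exact hs.2.1
    · exact hd.2.1
  have cpq := (hadj p q hpq.ne).mp hpq
  have cqr := (hadj q r hqr.ne).mp hqr
  have cpr := (hadj p r hpr.ne).mp hpr
  exact TriPoleAux.tri (ρ p) (ρ q) (ρ r) cpq cqr cpr
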